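/- If γ is a permutation of a finite trace β that preserves the dependency partial order →β (i.e., whenever π →β φ, the image of π precedes the image of φ in γ), then for each process p, the subsequence of γ at process p equals the subsequence of β at process p. -/

import Mathlib

/-!
Filtering commutes with reindexing, so it suffices that `σ⁻¹` carries the increasing list of
positions of `γ` holding events of `p` onto the corresponding list for `β`. Because `σ` is strictly
monotone on the positions of `p`, the image list is still strictly increasing, and two strictly
increasing lists with the same elements coincide.
-/

structure Event where
  proc : ℕ

namespace List

theorem map_symm_filter_finRange_of_strictMonoOn {n : ℕ} {σ : Equiv.Perm (Fin n)}
    {q : Fin n → Bool} (hσ : StrictMonoOn σ {i | q i}) :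
    ((finRange n).filter (q ∘ σ.symm)).map σ.symm = (finRange n).filter q := by
  refine Pairwise.eq_of_mem_iff (r := (· < ·)) ?_ ((pairwise_lt_finRange n).filter _) ?_
  · refine pairwise_map.2 <| ((pairwise_lt_finRange n).filter _).imp_of_mem ?_
    intro a b ha hb hab
    rw [← hσ.lt_iff_lt (mem_filter.1 ha).2 (mem_filter.1 hb).2]
    simpa using hab
  · intro i
    simp only [mem_map, mem_filter, mem_finRange, true_and, Function.comp_apply]
    exact ⟨by rintro ⟨j, hj, rfl⟩; exact hj, fun hi => ⟨σ i, by simpa using hi, by simp⟩⟩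

theorem filter_ofFn_comp_symm {α : Type*} {n : ℕ} (f : Fin n → α) {σ : Equiv.Perm (Fin n)}
    {P : α → Bool} (hσ : StrictMonoOn σ {i | P (f i)}) :
    (ofFn (f ∘ σ.symm)).filter P = (ofFn f).filter P := by
  simp only [ofFn_eq_map, ← map_map, filter_map]
  rw [← map_symm_filter_finRange_of_strictMonoOn (q := P ∘ f) hσ]

end List

theorem reordering_preserves_per_process_subsequences
    (n : ℕ) (β : List Event) (hβ : β.length = n)
    (σ : Equiv.Perm (Fin n))
    (γ : List Event)
    (hγ : γ = List.ofFn (fun j : Fin n => β.get (hβ ▸ σ.symm j)))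
    (horder : ∀ i j : Fin n, i < j →
      (β.get (hβ ▸ i)).proc = (β.get (hβ ▸ j)).proc → σ i < σ j) :
    ∀ p : ℕ, γ.filter (fun e => e.proc == p) = β.filter (fun e => e.proc == p) := by
  subst hβ hγ
  intro p
  have hσ : StrictMonoOn σ {i | (β.get i).proc == p} := by
    intro i hi j hj hij
    simp only [Set.mem_ofPred_eq, beq_iff_eq] at hi hj
    exact horder i j hij (hi.trans hj.symm)
  conv_rhs => rw [← List.ofFn_get β]
  exact List.filter_ofFn_comp_symm β.get hσ
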